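/- Fix r_b, r_γ ≥ 1, a positive integer d, 0 < ε < (1/4)·r_b^{−d}, and an r_γ-uniform hypergraph H with Turán density zero. Then there exist constants 0 < λ = λ(r_b,r_γ,d,ε,H) < ε, L_1 = L_1(r_b,r_γ,d,ε,H), and L_2 = L_2(r_b,r_γ,d,ε,H) such that the following holds. Let (B, γ, F) be an (r_b, r_γ)-uniform fiber bundle with dim_H(B, γ, F) < d and |γ(b)| ≥ ε·C(|F|, r_γ) for all b ∈ V(B). Assume |F| ≥ L_1 and, for every edge E of B and every pair of distinct vertices x, y ∈ E, |γ(x) ∩ γ(y)| ≤ λ·C(|F|, r_γ). If r_b = 1 then B has at most L_2 edges, and if r_b ≥ 2 then χ(B) ≤ L_2. -/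

import Mathlib

open Finset

/-!
A density-increment argument. Call a region `W` of base vertices `μ`-dense on a ground set `Ω` of
`r_γ`-sets if every fiber over `W` contains a `μ`-fraction of `Ω`. Take a largest matching `M` of
edges inside `W` all of whose transversals have sections of density at least `(ε/2)^|M|` in `Ω`;
since `dim_H < d` and `H` has Turán density zero, `|M| < d`. An edge avoiding `⋃ M` cannot extend
`M`, so one of its vertices has a fiber thin on the section of some transversal `X ⊆ ⋃ M`,
and all such vertices are `(μ + (ε/2)^(d+1))`-dense on `Ω` minus that section, which keeps at
least an `ε/2`-fraction of `Ω`. Recursing into these at most `2^(r_b(d-1))` parts, densities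
would exceed `1` after `⌈(ε/2)^-(d+1)⌉` rounds, so every edge is caught by a tree of cores of
bounded depth and branching. Giving the vertices of each core their own colours and the parts
disjoint palettes colours `B` properly when `r_b ≥ 2`; when `r_b = 1` the same tree counts the
edges.
-/

/-- `A` embeds into `B` (i.e. `B` contains a copy of `A`). -/
def Embeds {α β : Type} [DecidableEq β] (A : Finset (Finset α)) (B : Finset (Finset β)) : Prop :=
  ∃ f : α → β, Function.Injective f ∧ ∀ e ∈ A, e.image f ∈ B

/-- The chromatic number of the hypergraph with edge set `A` is at most `K`. -/
def ChromAtMost {α : Type} (A : Finset (Finset α)) (K : ℕ) : Prop :=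
  ∃ f : α → Fin K, ∀ e ∈ A, ∃ x ∈ e, ∃ y ∈ e, f x ≠ f y

/-- The Turán number `ex(N, H)` for `r`-uniform hypergraphs on `N` vertices. -/
noncomputable def exNum {α : Type} (r : ℕ) (H : Finset (Finset α)) (N : ℕ) : ℕ :=
  sSup {c : ℕ | ∃ G : Finset (Finset (Fin N)),
    (∀ e ∈ G, e.card = r) ∧ ¬ Embeds H G ∧ G.card = c}

def sectionOf {V F : Type} [Fintype F] [DecidableEq F]
    (γ : V → Finset (Finset F)) (X : Finset V) : Finset (Finset F) :=
  Finset.univ.filter (fun e => ∀ x ∈ X, e ∈ γ x)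

/-- `dim_H(B, γ, F) ≥ d`. -/
def HasBundleDim {V F α : Type} [DecidableEq V] [Fintype F] [DecidableEq F]
    (BE : Finset (Finset V)) (γ : V → Finset (Finset F))
    (H : Finset (Finset α)) (d : ℕ) : Prop :=
  ∃ M : Finset (Finset V), M.card = d ∧ (∀ e ∈ M, e ∈ BE) ∧
    (∀ e₁ ∈ M, ∀ e₂ ∈ M, e₁ ≠ e₂ → Disjoint e₁ e₂) ∧
    ∀ sel : Finset V → V, (∀ e ∈ M, sel e ∈ e) →
      Embeds H (sectionOf γ (M.image sel))

lemma embeds_of_exNum_lt {α : Type} {r N : ℕ} (H : Finset (Finset α))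
    {G : Finset (Finset (Fin N))} (hG : ∀ e ∈ G, #e = r) (h : exNum r H N < #G) :
    Embeds H G := by
  by_contra hne
  refine h.not_ge (le_csSup ⟨Fintype.card (Finset (Fin N)), ?_⟩ ⟨G, hG, hne, rfl⟩)
  rintro c ⟨G', -, -, rfl⟩
  exact card_le_univ G'

section LayeredCover

variable {V : Type}

lemma ChromAtMost.of_coloring {κ : Type} [Fintype κ] {A : Finset (Finset V)} {K : ℕ}
    (f : V → κ) (hf : ∀ e ∈ A, ∃ x ∈ e, ∃ y ∈ e, f x ≠ f y)
    (hK : Fintype.card κ ≤ K) : ChromAtMost A K := by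
  let g := (Fintype.equivFin κ).toEmbedding.trans (Fin.castLEEmb hK)
  refine ⟨g ∘ f, fun e he => ?_⟩
  obtain ⟨x, hx, y, hy, hxy⟩ := hf e he
  exact ⟨x, hx, y, hy, g.injective.ne hxy⟩

lemma ChromAtMost.mono {A : Finset (Finset V)} {K K' : ℕ} (h : ChromAtMost A K) (hK : K ≤ K') :
    ChromAtMost A K' :=
  let ⟨f, hf⟩ := h
  .of_coloring f hf (by simpa using hK)

variable [DecidableEq V] {A : Finset (Finset V)} {W C : Finset V} {Ps : Finset (Finset V)} {K : ℕ}

/-- Vertices of `C` get their own colours, a vertex of a part `P` the colour of its colouring of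
`P` tagged with `P`, and all other vertices one extra colour. -/
lemma chromAtMost_filter_of_cover (hA : ∀ e ∈ A, 2 ≤ #e)
    (hcover : ∀ e ∈ A, e ⊆ W → (e ∩ C).Nonempty ∨ ∃ P ∈ Ps, (e ∩ P).Nonempty)
    (hPs : ∀ P ∈ Ps, ChromAtMost (A.filter (· ⊆ P)) K) :
    ChromAtMost (A.filter (· ⊆ W)) (#C + 1 + #Ps * K) := by
  have hPs' : ∀ P : Ps, ∃ f : V → Fin K,
      ∀ e ∈ A.filter (· ⊆ P.1), ∃ x ∈ e, ∃ y ∈ e, f x ≠ f y :=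
    fun P => hPs P P.2
  choose f hf using hPs'
  let color : V → Option C ⊕ (Ps × Fin K) := fun v =>
    if hv : v ∈ C then .inl (some ⟨v, hv⟩)
    else if hP : ∃ P : Ps, v ∈ P.1 then .inr (hP.choose, f hP.choose v) else .inl none
  refine .of_coloring color (fun e he => ?_) (by simp)
  obtain ⟨heA, heW⟩ := mem_filter.1 he
  by_cases heC : (e ∩ C).Nonempty
  · obtain ⟨x, hx⟩ := heC
    obtain ⟨hxe, hxC⟩ := mem_inter.1 hx
    obtain ⟨y, hye, hyx⟩ := exists_mem_ne (hA e heA) x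
    refine ⟨x, hxe, y, hye, ?_⟩
    simp only [color, dif_pos hxC]
    split_ifs <;> simp [Ne.symm hyx]
  obtain ⟨P, hP, x, hx⟩ := (hcover e heA heW).resolve_left heC
  have hnC : ∀ y ∈ e, y ∉ C := fun y hy hyC => heC ⟨y, mem_inter.2 ⟨hy, hyC⟩⟩
  have hxP : ∃ Q : Ps, x ∈ Q.1 := ⟨⟨P, hP⟩, (mem_inter.1 hx).2⟩
  have hxe := (mem_inter.1 hx).1
  by_contra! hmono
  have hsame : ∀ y ∈ e, y ∈ hxP.choose.1 ∧ f hxP.choose y = f hxP.choose x := by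
    intro y hy
    have h := hmono y hy x hxe
    simp only [color, dif_neg (hnC y hy), dif_neg (hnC x hxe), dif_pos hxP] at h
    split_ifs at h with hyP
    obtain ⟨hQ, hfy⟩ := Prod.mk_inj.1 (Sum.inr.inj_iff.1 h)
    exact ⟨hQ ▸ hyP.choose_spec, hQ ▸ hfy⟩
  obtain ⟨a, ha, b, hb, hab⟩ :=
    hf hxP.choose e (mem_filter.2 ⟨heA, fun y hy => (hsame y hy).1⟩)
  exact hab ((hsame a ha).2.trans (hsame b hb).2.symm)

lemma mem_of_singleton_inter_nonempty {v : V} {S : Finset V} (h : ({v} ∩ S).Nonempty) : v ∈ S :=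
  let ⟨_, hx⟩ := h
  mem_singleton.1 (mem_inter.1 hx).1 ▸ (mem_inter.1 hx).2

lemma card_filter_subset_le_of_cover (hA : ∀ e ∈ A, #e = 1)
    (hcover : ∀ e ∈ A, e ⊆ W → (e ∩ C).Nonempty ∨ ∃ P ∈ Ps, (e ∩ P).Nonempty)
    (hPs : ∀ P ∈ Ps, #(A.filter (· ⊆ P)) ≤ K) :
    #(A.filter (· ⊆ W)) ≤ #C + #Ps * K := by
  have hsub :
      A.filter (· ⊆ W) ⊆ C.image singleton ∪ Ps.biUnion (fun P => A.filter (· ⊆ P)) := by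
    intro e he
    obtain ⟨heA, heW⟩ := mem_filter.1 he
    obtain ⟨v, rfl⟩ := card_eq_one.1 (hA _ heA)
    rcases hcover _ heA heW with hvC | ⟨P, hP, hvP⟩
    · exact mem_union_left _ (mem_image_of_mem _ (mem_of_singleton_inter_nonempty hvC))
    · refine mem_union_right _ (mem_biUnion.2 ⟨P, hP, mem_filter.2 ⟨heA, ?_⟩⟩)
      exact singleton_subset_iff.2 (mem_of_singleton_inter_nonempty hvP)
  calc #(A.filter (· ⊆ W))
      ≤ #(C.image singleton) + #(Ps.biUnion fun P => A.filter (· ⊆ P)) :=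
        (card_le_card hsub).trans (card_union_le _ _)
    _ ≤ #C + #Ps * K := add_le_add card_image_le (card_biUnion_le_card_mul _ _ _ hPs)

def HasLayeredCover (A : Finset (Finset V)) (c m : ℕ) : ℕ → Finset V → Prop
  | 0, W => ∀ e ∈ A, ¬ e ⊆ W
  | n + 1, W => ∃ (C : Finset V) (Ps : Finset (Finset V)), #C ≤ c ∧ #Ps ≤ m ∧
      (∀ e ∈ A, e ⊆ W → (e ∩ C).Nonempty ∨ ∃ P ∈ Ps, (e ∩ P).Nonempty) ∧
      ∀ P ∈ Ps, HasLayeredCover A c m n P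

def colorBound (c m : ℕ) : ℕ → ℕ
  | 0 => 1
  | n + 1 => c + 1 + m * colorBound c m n

def edgeBound (c m : ℕ) : ℕ → ℕ
  | 0 => 0
  | n + 1 => c + m * edgeBound c m n

theorem HasLayeredCover.chromAtMost {c m : ℕ} (hA : ∀ e ∈ A, 2 ≤ #e) :
    ∀ {n : ℕ} {W : Finset V}, HasLayeredCover A c m n W →
      ChromAtMost (A.filter (· ⊆ W)) (colorBound c m n)
  | 0, _, h => .of_coloring (fun _ => ()) (fun e he => absurd (mem_filter.1 he).2
      (h e (mem_filter.1 he).1)) (by simp [colorBound])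
  | _ + 1, _, ⟨_, _, hC, hPs, hcover, hparts⟩ =>
    (chromAtMost_filter_of_cover hA hcover fun P hP => (hparts P hP).chromAtMost hA).mono
      (by simp only [colorBound]; gcongr)

theorem HasLayeredCover.card_filter_le {c m : ℕ} (hA : ∀ e ∈ A, #e = 1) :
    ∀ {n : ℕ} {W : Finset V}, HasLayeredCover A c m n W →
      #(A.filter (· ⊆ W)) ≤ edgeBound c m n
  | 0, _, h => by simp_all [HasLayeredCover, edgeBound]
  | _ + 1, _, ⟨_, _, hC, hPs, hcover, hparts⟩ =>
    (card_filter_subset_le_of_cover hA hcover fun P hP => (hparts P hP).card_filter_le hA).trans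
      (by simp only [edgeBound]; gcongr)

end LayeredCover

lemma density_increment {β : Type} [DecidableEq β] {A Ω S : Finset β} (hS : S ⊆ Ω)
    {t μ : ℝ} {k d : ℕ} (ht0 : 0 ≤ t) (ht1 : t ≤ 1) (hμ : 2 * t ≤ μ) (hkd : k < d)
    (hSΩ : t ^ k * #Ω ≤ #S) (hA : μ * #Ω ≤ #(A ∩ Ω))
    (hAS : #(A ∩ S) < t ^ (k + 1) * #Ω) :
    t * #Ω ≤ #(Ω \ S) ∧ (μ + t ^ (d + 1)) * #(Ω \ S) ≤ #(A ∩ (Ω \ S)) := by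
  have hsplit : (#(A ∩ (Ω \ S)) : ℝ) = #(A ∩ Ω) - #(A ∩ S) := by
    have h := card_inter_add_card_sdiff (A ∩ Ω) S
    rw [inter_assoc, inter_eq_right.2 hS, inter_sdiff_assoc] at h
    rw [← h]; push_cast; ring
  have hrest : (#(Ω \ S) : ℝ) = #Ω - #S := by
    rw [card_sdiff_of_subset hS, Nat.cast_sub (card_le_card hS)]
  have hΩ : (0 : ℝ) ≤ #Ω := Nat.cast_nonneg _
  have htk : t ^ k ≤ 1 := pow_le_one₀ ht0 ht1
  have htk1 : t ^ (k + 1) ≤ t := pow_le_of_le_one ht0 ht1 (Nat.succ_ne_zero k)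
  -- the loss `t ^ (k + 1)` from `A ∩ S` is paid for by `S` having density `t ^ k ≥ t ^ (d - 1)`
  have hgain : (μ + t ^ (d + 1)) * (1 - t ^ k) ≤ μ - t ^ (k + 1) := by
    have hη : t ^ (d + 1) ≤ t ^ (k + 1) := pow_le_pow_of_le_one ht0 ht1 (by omega)
    have hηk : 0 ≤ t ^ (d + 1) * t ^ k := by positivity
    nlinarith [pow_succ t k, pow_nonneg ht0 k]
  have hlarge : (μ - t ^ (k + 1)) * #Ω ≤ #(A ∩ (Ω \ S)) := by rw [hsplit]; linarith
  constructor
  · have : (#(A ∩ (Ω \ S)) : ℝ) ≤ #(Ω \ S) := by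
      exact_mod_cast card_le_card inter_subset_right
    nlinarith
  · have hμη : 0 ≤ μ + t ^ (d + 1) := by linarith [pow_nonneg ht0 (d + 1)]
    calc (μ + t ^ (d + 1)) * #(Ω \ S) ≤ (μ + t ^ (d + 1)) * ((1 - t ^ k) * #Ω) :=
          mul_le_mul_of_nonneg_left (by rw [hrest]; linarith) hμη
      _ ≤ (μ - t ^ (k + 1)) * #Ω := by nlinarith
      _ ≤ #(A ∩ (Ω \ S)) := hlarge

section Bundle

variable {V F α : Type} [Fintype F] [DecidableEq F] {γ : V → Finset (Finset F)}
  {H : Finset (Finset α)}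

lemma sectionOf_empty : sectionOf γ ∅ = univ := by
  ext; simp [sectionOf]

lemma card_eq_of_mem_sectionOf {r : ℕ} (hγ : ∀ b, ∀ e ∈ γ b, #e = r) {X : Finset V}
    (hX : X.Nonempty) {e : Finset F} (he : e ∈ sectionOf γ X) : #e = r :=
  let ⟨x, hx⟩ := hX
  hγ x e ((mem_filter.1 he).2 x hx)

variable [DecidableEq V]

lemma sectionOf_insert (x : V) (X : Finset V) :
    sectionOf γ (insert x X) = γ x ∩ sectionOf γ X := by
  ext; simp [sectionOf]

lemma HasBundleDim.mono {A B : Finset (Finset V)} {d : ℕ} (h : HasBundleDim A γ H d)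
    (hAB : A ⊆ B) : HasBundleDim B γ H d :=
  let ⟨M, hM, hMA, hdisj, hsel⟩ := h
  ⟨M, hM, fun e he => hAB (hMA e he), hdisj, hsel⟩

def IsRichMatching (A : Finset (Finset V)) (γ : V → Finset (Finset F)) (Ω : Finset (Finset F))
    (s : ℝ) (M : Finset (Finset V)) : Prop :=
  M ⊆ A ∧ (M : Set (Finset V)).PairwiseDisjoint id ∧
    ∀ sel : Finset V → V, (∀ E ∈ M, sel E ∈ E) →
      s ≤ #(Ω ∩ sectionOf γ (M.image sel))

variable {A : Finset (Finset V)} {Ω : Finset (Finset F)} {τ s : ℝ} {M : Finset (Finset V)}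

lemma isRichMatching_empty : IsRichMatching A γ Ω #Ω ∅ :=
  ⟨empty_subset A, by simp, fun _ _ => by simp [sectionOf_empty]⟩

lemma IsRichMatching.hasBundleDim (hM : IsRichMatching A γ Ω s M) (hMne : M.Nonempty)
    (hτ : ∀ X : Finset V, X.Nonempty → τ < #(sectionOf γ X) → Embeds H (sectionOf γ X))
    (hs : τ < s) : HasBundleDim A γ H #M := by
  refine ⟨M, rfl, fun e he => hM.1 he, fun _ h₁ _ h₂ hne => hM.2.1 h₁ h₂ hne,
    fun sel hsel => hτ _ (hMne.image sel) (hs.trans_le ((hM.2.2 sel hsel).trans ?_))⟩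
  exact_mod_cast card_le_card inter_subset_right

lemma exists_maximal_isRichMatching {d : ℕ} (hd : 0 < d) (hdim : ¬ HasBundleDim A γ H d)
    (hτ : ∀ X : Finset V, X.Nonempty → τ < #(sectionOf γ X) → Embeds H (sectionOf γ X))
    {t : ℝ} (hτΩ : τ < t ^ d * #Ω) :
    ∃ M, #M < d ∧ IsRichMatching A γ Ω (t ^ #M * #Ω) M ∧
      ∀ M', #M' = #M + 1 → ¬ IsRichMatching A γ Ω (t ^ (#M + 1) * #Ω) M' := by
  classical
  let Rich k := ∃ M, #M = k ∧ IsRichMatching A γ Ω (t ^ k * #Ω) M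
  have h0 : Rich 0 := ⟨∅, rfl, by simpa using isRichMatching_empty⟩
  have hnd : ¬ Rich d := fun ⟨M, hMd, hM⟩ =>
    hdim (hMd ▸ hM.hasBundleDim (card_pos.1 (hMd ▸ hd)) hτ hτΩ)
  obtain ⟨M, hMk, hM⟩ : Rich (Nat.findGreatest Rich d) :=
    Nat.findGreatest_spec (Nat.zero_le d) h0
  have hk : Nat.findGreatest Rich d < d :=
    (Nat.findGreatest_le d).lt_of_ne fun h => hnd (h ▸ ⟨M, hMk, hM⟩)
  refine ⟨M, hMk ▸ hk, hMk ▸ hM, fun M' hM' hrich => ?_⟩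
  rw [hMk] at hM'
  exact Nat.findGreatest_is_greatest (P := Rich) (Nat.lt_succ_self _) (by omega)
    ⟨M', hM', hMk ▸ hrich⟩

lemma IsRichMatching.exists_thin_of_not_insert {s' : ℝ} {e : Finset V}
    (hM : IsRichMatching A γ Ω s M) (he : e ∈ A) (hdisj : Disjoint e (M.biUnion id))
    (hnot : ¬ IsRichMatching A γ Ω s' (insert e M)) :
    ∃ X ⊆ M.biUnion id, s ≤ #(Ω ∩ sectionOf γ X) ∧
      ∃ x ∈ e, #(γ x ∩ (Ω ∩ sectionOf γ X)) < s' := by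
  have hpd : ((insert e M : Finset (Finset V)) : Set (Finset V)).PairwiseDisjoint id := by
    rw [coe_insert]
    exact hM.2.1.insert fun E hE _ => hdisj.mono_right (subset_biUnion_of_mem id hE)
  obtain ⟨sel, hsel, hlt⟩ : ∃ sel : Finset V → V, (∀ E ∈ insert e M, sel E ∈ E) ∧
      #(Ω ∩ sectionOf γ ((insert e M).image sel)) < s' := by
    by_contra! h
    exact hnot ⟨insert_subset he hM.1, hpd, h⟩
  refine ⟨M.image sel, fun x hx => ?_, hM.2.2 sel fun E hE => hsel E (mem_insert_of_mem hE),
    sel e, hsel e (mem_insert_self e M), ?_⟩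
  · obtain ⟨E, hE, rfl⟩ := mem_image.1 hx
    exact mem_biUnion.2 ⟨E, hE, hsel E (mem_insert_of_mem hE)⟩
  · rwa [image_insert, sectionOf_insert, inter_left_comm] at hlt

theorem exists_cover_by_denser_parts {BE : Finset (Finset V)} {rb d : ℕ}
    (hBE : ∀ e ∈ BE, #e = rb) (hrb : 0 < rb) (hd : 0 < d) (hdim : ¬ HasBundleDim BE γ H d)
    (hτ : ∀ X : Finset V, X.Nonempty → τ < #(sectionOf γ X) → Embeds H (sectionOf γ X))
    {t μ : ℝ} (ht0 : 0 ≤ t) (ht1 : t ≤ 1) (hμ : 2 * t ≤ μ) (hτΩ : τ < t ^ d * #Ω)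
    {W : Finset V} (hW : ∀ v ∈ W, μ * #Ω ≤ #(γ v ∩ Ω)) :
    ∃ (C : Finset V) (Ps : Finset (Finset V)), #C ≤ rb * (d - 1) ∧
      #Ps ≤ 2 ^ (rb * (d - 1)) ∧
      (∀ e ∈ BE, e ⊆ W → (e ∩ C).Nonempty ∨ ∃ P ∈ Ps, (e ∩ P).Nonempty) ∧
      ∀ P ∈ Ps, ∃ Ω' : Finset (Finset F), t * #Ω ≤ #Ω' ∧
        ∀ v ∈ P, (μ + t ^ (d + 1)) * #Ω' ≤ #(γ v ∩ Ω') := by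
  obtain ⟨M, hMd, hM, hmax⟩ := exists_maximal_isRichMatching (A := BE.filter (· ⊆ W)) hd
    (fun h => hdim (h.mono (filter_subset _ _))) hτ hτΩ
  set C := M.biUnion id
  let thin (X : Finset V) : Finset V :=
    W.filter fun v => #(γ v ∩ (Ω ∩ sectionOf γ X)) < t ^ (#M + 1) * #Ω
  let rich : Finset (Finset V) :=
    C.powerset.filter fun X => t ^ #M * #Ω ≤ #(Ω ∩ sectionOf γ X)
  have hC : #C ≤ rb * (d - 1) := calc
    #C ≤ #M * rb :=
      card_biUnion_le_card_mul _ _ _ fun E hE => (hBE E (mem_filter.1 (hM.1 hE)).1).le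
    _ ≤ rb * (d - 1) := by rw [mul_comm]; gcongr; omega
  refine ⟨C, rich.image thin, hC, ?_, fun e he heW => ?_, ?_⟩
  · calc #(rich.image thin) ≤ #C.powerset := card_image_le.trans (card_filter_le _ _)
      _ ≤ 2 ^ (rb * (d - 1)) := by rw [card_powerset]; gcongr; norm_num
  · by_cases heC : (e ∩ C).Nonempty
    · exact .inl heC
    have heM : e ∉ M := fun heM =>
      let ⟨x, hx⟩ := card_pos.1 (hrb.trans_eq (hBE e he).symm)
      heC ⟨x, mem_inter.2 ⟨hx, mem_biUnion.2 ⟨e, heM, hx⟩⟩⟩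
    obtain ⟨X, hXC, hX, x, hxe, hx⟩ := hM.exists_thin_of_not_insert (mem_filter.2 ⟨he, heW⟩)
      (disjoint_iff_inter_eq_empty.2 (not_nonempty_iff_eq_empty.1 heC))
      (hmax _ (card_insert_of_notMem heM))
    exact .inr ⟨thin X, mem_image_of_mem _ (mem_filter.2 ⟨mem_powerset.2 hXC, hX⟩),
      x, mem_inter.2 ⟨hxe, mem_filter.2 ⟨heW hxe, hx⟩⟩⟩
  · simp only [forall_mem_image]
    intro X hX
    rcases (thin X).eq_empty_or_nonempty with hempty | ⟨w, hw⟩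
    · exact ⟨Ω, mul_le_of_le_one_left (Nat.cast_nonneg _) ht1, by simp [hempty]⟩
    have hincr {v} (hv : v ∈ thin X) := density_increment inter_subset_left ht0 ht1 hμ hMd
      (mem_filter.1 hX).2 (hW v (mem_filter.1 hv).1) (mem_filter.1 hv).2
    exact ⟨Ω \ (Ω ∩ sectionOf γ X), (hincr hw).1, fun v hv => (hincr hv).2⟩

/-- Densities never exceed `1`, so the invariant `1 < μ + n * t ^ (d + 1)` leaves no edge inside
`W` at depth `0`. -/
theorem hasLayeredCover_of_dense {BE : Finset (Finset V)} {rb d : ℕ}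
    (hBE : ∀ e ∈ BE, #e = rb) (hrb : 0 < rb) (hd : 0 < d) (hdim : ¬ HasBundleDim BE γ H d)
    (hτ : ∀ X : Finset V, X.Nonempty → τ < #(sectionOf γ X) → Embeds H (sectionOf γ X))
    {t σ : ℝ} (ht0 : 0 ≤ t) (ht1 : t ≤ 1) (hσ : 0 < σ) (hτσ : τ < t ^ d * σ)
    (n : ℕ) : ∀ (W : Finset V) (Ω : Finset (Finset F)) (μ : ℝ), 2 * t ≤ μ →
      1 < μ + n * t ^ (d + 1) → σ ≤ t ^ n * #Ω →
      (∀ v ∈ W, μ * #Ω ≤ #(γ v ∩ Ω)) →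
      HasLayeredCover BE (rb * (d - 1)) (2 ^ (rb * (d - 1))) n W := by
  induction n with
  | zero =>
    intro W Ω μ _ hμ1 hσΩ hW e he heW
    obtain ⟨v, hv⟩ := card_pos.1 (hrb.trans_eq (hBE e he).symm)
    have hfib : (#(γ v ∩ Ω) : ℝ) ≤ #Ω := by exact_mod_cast card_le_card inter_subset_right
    simp only [CharP.cast_eq_zero, zero_mul, add_zero, pow_zero, one_mul] at hμ1 hσΩ
    nlinarith [hW v (heW hv)]
  | succ n ih =>
    intro W Ω μ hμ hμ1 hσΩ hW
    have hΩ : σ ≤ #Ω :=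
      hσΩ.trans (mul_le_of_le_one_left (Nat.cast_nonneg _) (pow_le_one₀ ht0 ht1))
    obtain ⟨C, Ps, hC, hPs, hcover, hparts⟩ := exists_cover_by_denser_parts hBE hrb hd hdim hτ
      ht0 ht1 hμ (hτσ.trans_le (mul_le_mul_of_nonneg_left hΩ (pow_nonneg ht0 d))) hW
    refine ⟨C, Ps, hC, hPs, hcover, fun P hP => ?_⟩
    obtain ⟨Ω', hΩ', hP'⟩ := hparts P hP
    refine ih P Ω' _ (by linarith [pow_nonneg ht0 (d + 1)]) (by push_cast at hμ1; linarith)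
      ?_ hP'
    calc σ ≤ t ^ (n + 1) * #Ω := hσΩ
      _ = t ^ n * (t * #Ω) := by ring
      _ ≤ t ^ n * #Ω' := mul_le_mul_of_nonneg_left hΩ' (pow_nonneg ht0 n)

end Bundle

theorem conditional_fiber_bundle_coloring_general
    (rb rγ d : ℕ) (hrb : 1 ≤ rb) (hd : 0 < d)
    (ε : ℝ) (hε0 : 0 < ε) (hε1 : ε < (1 / 4) * ((rb : ℝ) ^ d)⁻¹)
    (mh : ℕ) (H : Finset (Finset (Fin mh)))
    (hπ : Filter.Tendsto (fun N : ℕ => (exNum rγ H N : ℝ) / (N.choose rγ : ℝ))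
      Filter.atTop (nhds 0)) :
    ∃ lam : ℝ, ∃ L₁ L₂ : ℕ, 0 < lam ∧ lam < ε ∧
      ∀ (nb nf : ℕ) (BE : Finset (Finset (Fin nb)))
        (γ : Fin nb → Finset (Finset (Fin nf))),
        (∀ e ∈ BE, e.card = rb) →
        (∀ b : Fin nb, ∀ e ∈ γ b, e.card = rγ) →
        ¬ HasBundleDim BE γ H d →
        (∀ b : Fin nb, ε * (nf.choose rγ : ℝ) ≤ ((γ b).card : ℝ)) →
        L₁ ≤ nf →
        (∀ E ∈ BE, ∀ x ∈ E, ∀ y ∈ E, x ≠ y →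
          (((γ x ∩ γ y).card : ℝ)) ≤ lam * (nf.choose rγ : ℝ)) →
        ((rb = 1 → BE.card ≤ L₂) ∧ (2 ≤ rb → ChromAtMost BE L₂)) := by
  set t := ε / 2 with ht
  have ht0 : 0 < t := by positivity
  have ht1 : t ≤ 1 := by
    have : ((rb : ℝ) ^ d)⁻¹ ≤ 1 :=
      inv_le_one_of_one_le₀ (one_le_pow₀ (by exact_mod_cast hrb))
    linarith
  -- `T` rounds of density increments `t ^ (d + 1)` exhaust the density range
  set T := ⌈(t ^ (d + 1))⁻¹⌉₊
  have hT : 1 < ε + T * t ^ (d + 1) := by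
    have := (inv_le_iff_one_le_mul₀ (pow_pos ht0 (d + 1))).1 (Nat.le_ceil (t ^ (d + 1))⁻¹)
    linarith
  obtain ⟨L₀, hL₀⟩ :=
    Filter.eventually_atTop.1 (hπ.eventually_lt_const (pow_pos ht0 (T + d)))
  set c := rb * (d - 1)
  refine ⟨t, max rγ L₀, max (colorBound c (2 ^ c) T) (edgeBound c (2 ^ c) T), ht0,
    by linarith, ?_⟩
  intro nb nf BE γ hBE hγ hdim hdens hnf _
  have hN : (0 : ℝ) < nf.choose rγ := Nat.cast_pos.2 (Nat.choose_pos (le_of_max_le_left hnf))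
  have hex : (exNum rγ H nf : ℝ) < t ^ d * (t ^ T * nf.choose rγ) := by
    have := (div_lt_iff₀ hN).1 (hL₀ nf (le_of_max_le_right hnf))
    rwa [← mul_assoc, ← pow_add, add_comm d]
  have hτ (X : Finset (Fin nb)) (hX : X.Nonempty)
      (h : (exNum rγ H nf : ℝ) < #(sectionOf γ X)) : Embeds H (sectionOf γ X) :=
    embeds_of_exNum_lt H (fun e => card_eq_of_mem_sectionOf hγ hX) (by exact_mod_cast h)
  have hcover := hasLayeredCover_of_dense hBE hrb hd hdim hτ ht0.le ht1 (by positivity) hex T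
    univ (powersetCard rγ univ) ε (by linarith) hT (by simp) (fun v _ => ?_)
  · have hBEW : BE.filter (· ⊆ univ) = BE := filter_true_of_mem fun e _ => subset_univ e
    refine ⟨fun h1 => ?_, fun h2 => ?_⟩
    · exact hBEW ▸ (hcover.card_filter_le fun e he => (hBE e he).trans h1).trans
        (le_max_right _ _)
    · exact hBEW ▸ (hcover.chromAtMost fun e he => (hBE e he).symm ▸ h2).mono
        (le_max_left _ _)
  · rw [inter_eq_left.2 fun e he => mem_powersetCard.2 ⟨subset_univ e, hγ v e he⟩]
    simpa using hdens v

/-- Theorem (conditional coloring theorem): suppose `0 < ε < (1/4)·r_b^{-d}` and `H` is an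
`r_γ`-uniform hypergraph with Turán density zero. There exist `0 < λ < ε` and constants
`L₁, L₂` such that any `(r_b, r_γ)`-uniform fiber bundle with `dim_H < d`, fibers of density
at least `ε`, `|F| ≥ L₁`, and `|γ(x) ∩ γ(y)| ≤ λ·C(|F|, r_γ)` for all pairs `x ≠ y` inside an
edge, satisfies: if `r_b = 1` then `B` has at most `L₂` edges, and if `r_b ≥ 2` then
`χ(B) ≤ L₂`. -/
theorem conditional_fiber_bundle_coloring
    (rb rγ d : ℕ) (hrb : 1 ≤ rb) (hrγ : 1 ≤ rγ) (hd : 0 < d)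
    (ε : ℝ) (hε0 : 0 < ε) (hε1 : ε < (1 / 4) * ((rb : ℝ) ^ d)⁻¹)
    (mh : ℕ) (H : Finset (Finset (Fin mh))) (hH : ∀ e ∈ H, e.card = rγ)
    (hπ : Filter.Tendsto (fun N : ℕ => (exNum rγ H N : ℝ) / (N.choose rγ : ℝ))
      Filter.atTop (nhds 0)) :
    ∃ lam : ℝ, ∃ L₁ L₂ : ℕ, 0 < lam ∧ lam < ε ∧
      ∀ (nb nf : ℕ) (BE : Finset (Finset (Fin nb)))
        (γ : Fin nb → Finset (Finset (Fin nf))),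
        (∀ e ∈ BE, e.card = rb) →
        (∀ b : Fin nb, ∀ e ∈ γ b, e.card = rγ) →
        ¬ HasBundleDim BE γ H d →
        (∀ b : Fin nb, ε * (nf.choose rγ : ℝ) ≤ ((γ b).card : ℝ)) →
        L₁ ≤ nf →
        (∀ E ∈ BE, ∀ x ∈ E, ∀ y ∈ E, x ≠ y →
          (((γ x ∩ γ y).card : ℝ)) ≤ lam * (nf.choose rγ : ℝ)) →
        ((rb = 1 → BE.card ≤ L₂) ∧ (2 ≤ rb → ChromAtMost BE L₂)) :=
  conditional_fiber_bundle_coloring_general rb rγ d hrb hd ε hε0 hε1 mh H hπ
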